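/- arXiv:1811.06755 — 2 statements merged into one kernel-verified Lean document; each statement's English description precedes it below -/
import Mathlib

section
/- Let K ∈ ℕ, let u_0, …, u_{K−1} ∈ L²(ℝ^d, ℂ), let λ_0, …, λ_{K−1} > 0, and let w ∈ L^∞(ℝ^d) be real-valued and even. Define ρ_K(x) := Σ_{j<K}|u_j(x)|²/λ_j, G_K(x,y) := Σ_{j<K} u_j(x)·conj(u_j(y))/λ_j, f_K(α,x) := |Σ_{j<K}α_j u_j(x)|² − ρ_K(x), and 𝒟^R_K(α) := ½ ∬_{ℝ^d×ℝ^d} f_K(α,x) w(x−y) f_K(α,y) dx dy. Then ∫_{ℂ^K} 𝒟^R_K(α) dμ₀(α) = ½ ∬_{ℝ^d×ℝ^d} |G_K(x,y)|² w(x−y) dx dy. -/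
open MeasureTheory Filter Topology Set
open scoped NNReal ENNReal

noncomputable section

/-- The centered complex Gaussian measure on `ℂ` with density
`z ↦ (l/π) · exp (−l·|z|²)` with respect to Lebesgue measure on `ℂ ≅ ℝ²`. -/
def gaussC (l : ℝ) : Measure ℂ :=
  volume.withDensity fun z => ENNReal.ofReal ((l / Real.pi) * Real.exp (-l * ‖z‖ ^ 2))

/-- `ρ_K(x) = Σ_{j<K} |u_j(x)|²/λ_j`. -/
def rhoFin (d K : ℕ) (u : Fin K → EuclideanSpace ℝ (Fin d) → ℂ) (l : Fin K → ℝ)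
    (x : EuclideanSpace ℝ (Fin d)) : ℝ :=
  ∑ j, ‖u j x‖ ^ 2 / l j

/-- The truncated Green kernel `G_K(x,y) = Σ_{j<K} u_j(x) conj(u_j(y))/λ_j`. -/
def greenFin (d K : ℕ) (u : Fin K → EuclideanSpace ℝ (Fin d) → ℂ) (l : Fin K → ℝ)
    (x y : EuclideanSpace ℝ (Fin d)) : ℂ :=
  ∑ j, u j x * (starRingEnd ℂ) (u j y) / (l j : ℂ)

/-- The centered squared field `f_K(α,x) = |Σ_{j<K} α_j u_j(x)|² − ρ_K(x)`. -/
def fFin (d K : ℕ) (u : Fin K → EuclideanSpace ℝ (Fin d) → ℂ) (l : Fin K → ℝ)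
    (α : Fin K → ℂ) (x : EuclideanSpace ℝ (Fin d)) : ℝ :=
  ‖∑ j, α j * u j x‖ ^ 2 - rhoFin d K u l x

/-- The renormalized interaction `𝒟^R_K(α) = ½ ∬ f_K(α,x) w(x−y) f_K(α,y) dx dy`. -/
def DRFin (d K : ℕ) (u : Fin K → EuclideanSpace ℝ (Fin d) → ℂ) (l : Fin K → ℝ)
    (w : EuclideanSpace ℝ (Fin d) → ℝ) (α : Fin K → ℂ) : ℝ :=
  (1 / 2) * ∫ q : EuclideanSpace ℝ (Fin d) × EuclideanSpace ℝ (Fin d),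
    fFin d K u l α q.1 * w (q.1 - q.2) * fFin d K u l α q.2

lemma radial_integral {l : ℝ} (hl : 0 < l) (a : ℕ) :
    ∫ r in Ioi (0:ℝ), r ^ (2*a+1) * Real.exp (-l * r^2)
      = (a.factorial : ℝ) / (2 * l^(a+1)) := by
  have h := MeasureTheory.integral_comp_rpow_Ioi
    (fun y : ℝ => y ^ (a:ℝ) * Real.exp (-(l * y))) (p := 2) two_ne_zero
  have h1 : ∫ x in Ioi (0:ℝ), (|2| * x ^ ((2:ℝ) - 1)) •
      ((x ^ (2:ℝ)) ^ (a:ℝ) * Real.exp (-(l * x ^ (2:ℝ))))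
      = ∫ x in Ioi (0:ℝ), 2 * (x ^ (2*a+1) * Real.exp (-l * x^2)) := by
    apply setIntegral_congr_fun measurableSet_Ioi
    intro x hx
    have hx2 : x ^ (2:ℝ) = x ^ (2:ℕ) := by
      exact_mod_cast Real.rpow_natCast x 2
    have e1 : x ^ ((2:ℝ) - 1) = x := by
      rw [show ((2:ℝ) - 1) = (1:ℝ) by norm_num, Real.rpow_one]
    simp only [abs_two, smul_eq_mul, e1, hx2, Real.rpow_natCast]
    ring_nf
  have h2 : ∫ y in Ioi (0:ℝ), (y : ℝ) ^ (a:ℝ) * Real.exp (-(l * y))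
      = (1/l) ^ ((a:ℝ)+1) * Real.Gamma ((a:ℝ)+1) := by
    have := Real.integral_rpow_mul_exp_neg_mul_Ioi
      (a := (a:ℝ)+1) (r := l) (by positivity) hl
    simpa using this
  rw [h1] at h
  rw [integral_const_mul] at h
  have h3 : Real.Gamma ((a:ℝ)+1) = a.factorial := by
    exact_mod_cast Real.Gamma_nat_eq_factorial a
  have h4 : (1/l : ℝ) ^ ((a:ℝ)+1) = (1/l)^(a+1 : ℕ) := by
    rw [show ((a:ℝ)+1) = ((a+1 : ℕ) : ℝ) by push_cast; ring, Real.rpow_natCast]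
  rw [h2, h3, h4] at h
  have hl' : l ≠ 0 := ne_of_gt hl
  field_simp at h ⊢
  rw [h, mul_right_comm, ← mul_pow, one_div_mul_cancel hl', one_pow, one_mul]

lemma angular_integral_ne {c : ℤ} (hc : c ≠ 0) :
    ∫ θ in Ioo (-Real.pi) Real.pi, Complex.exp (θ * Complex.I * c) = 0 := by
  rw [← integral_Ioc_eq_integral_Ioo,
    ← intervalIntegral.integral_of_le (by linarith [Real.pi_pos] : -Real.pi ≤ Real.pi)]
  have hc' : (Complex.I * c) ≠ 0 := by
    simp [Complex.I_ne_zero, hc]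
  have : ∀ θ : ℝ, (θ:ℂ) * Complex.I * c = (Complex.I * c) * θ := by intro θ; ring
  simp_rw [this]
  rw [integral_exp_mul_complex hc']
  have he : ∀ s : ℝ, Complex.exp (Complex.I * c * s) = Complex.cos (c * s) + Complex.sin (c * s) * Complex.I := by
    intro s
    rw [show Complex.I * c * s = ((c : ℂ) * s) * Complex.I by ring, Complex.exp_mul_I]
  rw [he, he]
  push_cast
  rw [show ((c:ℂ) * (-(Real.pi:ℂ))) = -((c:ℂ) * Real.pi) by ring]
  rw [Complex.cos_neg, Complex.sin_neg, Complex.sin_int_mul_pi]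
  ring

lemma angular_integral (a b : ℕ) :
    ∫ θ in Ioo (-Real.pi) Real.pi, Complex.exp (θ * Complex.I * ((a:ℂ) - (b:ℂ)))
      = if a = b then (2 * Real.pi : ℂ) else 0 := by
  by_cases hab : a = b
  · subst hab
    simp only [sub_self, mul_zero, Complex.exp_zero, if_pos rfl]
    rw [setIntegral_const, measureReal_def, Real.volume_Ioo]
    rw [show Real.pi - -Real.pi = Real.pi * 2 by ring]
    rw [ENNReal.toReal_ofReal (by positivity)]
    rw [Complex.real_smul]
    push_cast
    ring
  · have hc : ((a:ℤ) - (b:ℤ)) ≠ 0 := by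
      simpa [sub_eq_zero] using fun h => hab (by exact_mod_cast h)
    have := angular_integral_ne hc
    rw [if_neg hab]
    convert this using 3
    push_cast
    ring

lemma rho_cont (l : ℝ) : Continuous fun z : ℂ => l / Real.pi * Real.exp (-l * ‖z‖ ^ 2) :=
  continuous_const.mul (Real.continuous_exp.comp ((continuous_const (y := -l)).mul (continuous_norm.pow 2)))

lemma rho_toNNReal_meas (l : ℝ) :
    Measurable fun z : ℂ => (l / Real.pi * Real.exp (-l * ‖z‖ ^ 2)).toNNReal :=
  (continuous_real_toNNReal.comp (rho_cont l)).measurable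

lemma gaussC_eq (l : ℝ) : gaussC l
    = volume.withDensity
        (fun z : ℂ => ((l / Real.pi * Real.exp (-l * ‖z‖ ^ 2)).toNNReal : ℝ≥0∞)) := rfl

lemma integral_gaussC {l : ℝ} (hl : 0 < l) (F : ℂ → ℂ) :
    ∫ z, F z ∂gaussC l
      = ∫ z : ℂ, (l / Real.pi * Real.exp (-l * ‖z‖ ^ 2)) • F z := by
  rw [gaussC_eq, integral_withDensity_eq_integral_smul (rho_toNNReal_meas l) F]
  congr 1; ext z
  rw [NNReal.smul_def, Real.coe_toNNReal _ (by positivity)]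

lemma integrable_one_dim {l : ℝ} (hl : 0 < l) (n : ℕ) :
    Integrable (fun t : ℝ => (1 + t^2)^n * Real.exp (-l * t^2)) := by
  have hint : Integrable (fun t : ℝ =>
      (2:ℝ)^n * (Real.exp (-l * t^2) + t^(2*n) * Real.exp (-l * t^2))) := by
    apply Integrable.const_mul
    apply (integrable_exp_neg_mul_sq hl).add
    have hs : (-1:ℝ) < ((2*n : ℕ):ℝ) := by
      have : (0:ℝ) ≤ ((2*n:ℕ):ℝ) := Nat.cast_nonneg _
      linarith
    have := integrable_rpow_mul_exp_neg_mul_sq hl hs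
    simp_rw [Real.rpow_natCast] at this
    exact this
  apply hint.mono' (Continuous.aestronglyMeasurable ?_)
  swap
  · exact ((continuous_const.add ((continuous_id.pow 2))).pow n).mul
      (Real.continuous_exp.comp ((continuous_const (y := -l)).mul (continuous_id.pow 2)))
  filter_upwards with t
  have ht2 : (0:ℝ) ≤ t^2 := sq_nonneg t
  have h1 : (1 + t^2)^n ≤ 2^n * (1 + t^(2*n)) := by
    have hb : 1 + t^2 ≤ 2 * max 1 (t^2) := by
      rcases le_total 1 (t^2) with h|h
      · rw [max_eq_right h]; linarith
      · rw [max_eq_left h]; linarith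
    calc (1+t^2)^n ≤ (2 * max 1 (t^2))^n := pow_le_pow_left₀ (by positivity) hb n
    _ = 2^n * (max 1 (t^2))^n := mul_pow _ _ _
    _ ≤ 2^n * (1 + t^(2*n)) := by
        apply mul_le_mul_of_nonneg_left _ (by positivity)
        rcases le_total 1 (t^2) with h|h
        · rw [max_eq_right h, pow_mul]
          have : (0:ℝ) ≤ (t^2)^n := by positivity
          linarith
        · rw [max_eq_left h, one_pow, pow_mul]
          have : (0:ℝ) ≤ (t^2)^n := by positivity
          linarith
  rw [Real.norm_eq_abs, abs_of_nonneg (by positivity)]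
  have he : (0:ℝ) < Real.exp (-l * t^2) := Real.exp_pos _
  calc (1 + t^2)^n * Real.exp (-l * t^2)
      ≤ (2^n * (1 + t^(2*n))) * Real.exp (-l * t^2) :=
        mul_le_mul_of_nonneg_right h1 he.le
    _ = (2:ℝ)^n * (Real.exp (-l * t^2) + t^(2*n) * Real.exp (-l * t^2)) := by ring

lemma integrable_norm_pow_gauss {l : ℝ} (hl : 0 < l) (n : ℕ) :
    Integrable (fun z : ℂ => ‖z‖^n * Real.exp (-l * ‖z‖^2)) := by
  set g : ℝ → ℝ := fun t => (1 + t^2)^n * Real.exp (-l * t^2) with hg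
  have hgint := integrable_one_dim hl n
  have hprod : Integrable (fun p : ℝ × ℝ => g p.1 * g p.2) := by
    rw [Measure.volume_eq_prod]
    exact hgint.mul_prod hgint
  have he : Integrable
      ((fun p : ℝ × ℝ => g p.1 * g p.2) ∘ Complex.measurableEquivRealProd) volume := by
    rw [Complex.volume_preserving_equiv_real_prod.integrable_comp_emb
      Complex.measurableEquivRealProd.measurableEmbedding]
    exact hprod
  apply he.mono' (Continuous.aestronglyMeasurable ?_)
  swap
  · exact ((continuous_norm.pow n)).mul
      (Real.continuous_exp.comp ((continuous_const (y := -l)).mul (continuous_norm.pow 2)))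
  filter_upwards with z
  have hz : ‖z‖^2 = z.re^2 + z.im^2 := by
    rw [Complex.sq_norm, Complex.normSq_apply]; ring
  have hcomp : ((fun p : ℝ × ℝ => g p.1 * g p.2) ∘ Complex.measurableEquivRealProd) z
      = g z.re * g z.im := rfl
  rw [hcomp, Real.norm_eq_abs, abs_of_nonneg (by positivity), hg]
  simp only []
  have hnn : (0:ℝ) ≤ ‖z‖ := norm_nonneg z
  have h1 : ‖z‖^n ≤ ((1 + z.re^2) * (1 + z.im^2))^n := by
    apply pow_le_pow_left₀ hnn
    nlinarith [sq_nonneg z.re, sq_nonneg z.im, sq_nonneg (z.re*z.im), hz, sq_nonneg (‖z‖ - 1)]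
  have h2 : Real.exp (-l * ‖z‖^2) = Real.exp (-l * z.re^2) * Real.exp (-l * z.im^2) := by
    rw [← Real.exp_add, hz]; ring_nf
  calc ‖z‖^n * Real.exp (-l * ‖z‖^2)
      ≤ ((1 + z.re^2) * (1 + z.im^2))^n * Real.exp (-l * ‖z‖^2) :=
        mul_le_mul_of_nonneg_right h1 (Real.exp_pos _).le
    _ = ((1 + z.re^2)^n * Real.exp (-l * z.re^2)) * ((1 + z.im^2)^n * Real.exp (-l * z.im^2)) := by
        rw [h2, mul_pow]; ring

lemma integrable_monomial_gaussC {l : ℝ} (hl : 0 < l) (a b : ℕ) :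
    Integrable (fun z : ℂ => z ^ a * ((starRingEnd ℂ) z) ^ b) (gaussC l) := by
  rw [gaussC_eq, integrable_withDensity_iff_integrable_smul (rho_toNNReal_meas l)]
  have hmaj := (integrable_norm_pow_gauss hl (a+b)).const_mul (l / Real.pi)
  apply hmaj.mono' (Continuous.aestronglyMeasurable ?_)
  swap
  · exact ((continuous_real_toNNReal.comp (rho_cont l))).smul
      ((continuous_pow a).mul (Complex.continuous_conj.pow b))
  filter_upwards with z
  rw [NNReal.smul_def, Real.coe_toNNReal _ (by positivity), norm_smul]
  rw [Real.norm_eq_abs, abs_of_nonneg (by positivity)]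
  have : ‖z ^ a * ((starRingEnd ℂ) z) ^ b‖ = ‖z‖^(a+b) := by
    rw [norm_mul, norm_pow, norm_pow, RCLike.norm_conj, pow_add]
  rw [this]
  exact le_of_eq (by ring)

lemma integral_monomial_gaussC {l : ℝ} (hl : 0 < l) (a b : ℕ) :
    ∫ z, z ^ a * ((starRingEnd ℂ) z) ^ b ∂gaussC l
      = if a = b then (a.factorial : ℂ) / (l:ℂ) ^ a else 0 := by
  have key : ∫ z, z ^ a * ((starRingEnd ℂ) z) ^ b ∂gaussC l
      = (↑(∫ r in Ioi (0:ℝ), l / Real.pi * (r ^ (a+b+1) * Real.exp (-l * r^2))) : ℂ)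
        * ∫ θ in Ioo (-Real.pi) Real.pi, Complex.exp (θ * Complex.I * ((a:ℂ) - (b:ℂ))) := by
    rw [integral_gaussC hl]
    rw [← Complex.integral_comp_polarCoord_symm]
    rw [polarCoord_target]
    have hpt : ∀ p : ℝ × ℝ,
        p.1 • ((l / Real.pi * Real.exp (-l * ‖Complex.polarCoord.symm p‖ ^ 2)) •
          ((Complex.polarCoord.symm p) ^ a * ((starRingEnd ℂ) (Complex.polarCoord.symm p)) ^ b))
        = (((l / Real.pi * (p.1 ^ (a+b+1) * Real.exp (-l * p.1^2)) : ℝ)) : ℂ)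
          * Complex.exp (p.2 * Complex.I * ((a:ℂ) - (b:ℂ))) := by
      intro p
      have hsymm : Complex.polarCoord.symm p = (p.1 : ℂ) * Complex.exp (p.2 * Complex.I) := by
        rw [Complex.polarCoord_symm_apply, Complex.exp_mul_I]
        push_cast
        ring
      have hnorm : ‖Complex.polarCoord.symm p‖ ^ 2 = p.1 ^ 2 := by
        rw [hsymm, norm_mul, Complex.norm_real,
          Complex.norm_exp_ofReal_mul_I, mul_one, Real.norm_eq_abs, sq_abs]
      have hconj : (starRingEnd ℂ) ((p.1:ℂ) * Complex.exp (p.2 * Complex.I))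
          = (p.1:ℂ) * Complex.exp (-((p.2:ℂ) * Complex.I)) := by
        rw [map_mul, Complex.conj_ofReal, ← Complex.exp_conj, map_mul,
          Complex.conj_ofReal, Complex.conj_I]
        ring_nf
      rw [hnorm, hsymm, hconj]
      have hpow : ((p.1:ℂ) * Complex.exp (p.2 * Complex.I))^a
            * ((p.1:ℂ) * Complex.exp (-((p.2:ℂ) * Complex.I)))^b
          = (p.1:ℂ)^(a+b) * Complex.exp ((p.2:ℂ) * Complex.I * ((a:ℂ) - b)) := by
        rw [mul_pow, mul_pow, ← Complex.exp_nat_mul, ← Complex.exp_nat_mul,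
          mul_mul_mul_comm, ← pow_add, ← Complex.exp_add]
        congr 2
        ring
      rw [hpow, Complex.real_smul, Complex.real_smul]
      push_cast
      ring
    simp_rw [hpt]
    rw [Measure.volume_eq_prod, ← Measure.prod_restrict,
      integral_prod_mul (f := fun r : ℝ => ((l / Real.pi * (r ^ (a+b+1) * Real.exp (-l * r^2)) : ℝ) : ℂ))
        (g := fun θ : ℝ => Complex.exp ((θ:ℂ) * Complex.I * ((a:ℂ) - (b:ℂ))))]
    congr 1
    exact integral_ofReal
  rw [key, angular_integral]
  by_cases hab : a = b
  · subst hab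
    rw [if_pos rfl, if_pos rfl]
    rw [integral_const_mul, show a + a + 1 = 2*a+1 by ring, radial_integral hl a]
    have hπ := Real.pi_ne_zero
    have hl' : l ≠ 0 := ne_of_gt hl
    have hlc : (l:ℂ) ≠ 0 := by exact_mod_cast hl'
    have hπc : (Real.pi:ℂ) ≠ 0 := by exact_mod_cast hπ
    push_cast
    field_simp
    ring
  · simp [hab]

lemma gaussC_prob {l : ℝ} (hl : 0 < l) : IsProbabilityMeasure (gaussC l) := by
  constructor
  have hρ : Integrable (fun z : ℂ => l / Real.pi * Real.exp (-l * ‖z‖^2)) := by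
    have := (integrable_norm_pow_gauss hl 0).const_mul (l/Real.pi)
    simpa using this
  have hone : ∫ z, (1:ℂ) ∂gaussC l = 1 := by
    simpa using integral_monomial_gaussC hl 0 0
  have hint : ∫ z : ℂ, l / Real.pi * Real.exp (-l * ‖z‖^2) = 1 := by
    have h2 := integral_gaussC hl (fun _ => (1:ℂ))
    rw [hone] at h2
    have h3 : ∫ z : ℂ, (l/Real.pi * Real.exp (-l*‖z‖^2)) • (1:ℂ)
        = ((∫ z : ℂ, l/Real.pi * Real.exp (-l*‖z‖^2) : ℝ) : ℂ) := by
      simp_rw [Complex.real_smul, mul_one]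
      exact integral_ofReal
    rw [h3] at h2
    exact_mod_cast h2.symm
  rw [gaussC]
  rw [withDensity_apply _ MeasurableSet.univ, setLIntegral_univ]
  rw [← MeasureTheory.ofReal_integral_eq_lintegral_ofReal hρ
    (ae_of_all _ fun z => by positivity)]
  rw [hint]
  simp

section PiPort

variable {n : ℕ}

set_option maxHeartbeats 1000000 in
theorem my_integrable_pi_prod (μf : Fin n → Measure ℂ) [∀ i, SigmaFinite (μf i)]
    {f : Fin n → ℂ → ℂ} (hf : ∀ i, Integrable (f i) (μf i)) :
    Integrable (fun x : Fin n → ℂ => ∏ i, f i (x i)) (Measure.pi μf) := by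
  induction n with
  | zero =>
      simp only [Finset.univ_eq_empty, Finset.prod_empty, integrable_const_iff,
        Measure.pi_empty_univ, one_ne_zero, ENNReal.one_lt_top, or_true]
      exact Or.inr ⟨by rw [Measure.pi_empty_univ]; exact ENNReal.one_lt_top⟩
  | succ m ih =>
      have hmp := ((measurePreserving_piFinSuccAbove μf 0).symm)
      rw [← hmp.integrable_comp_emb (MeasurableEquiv.measurableEmbedding _)]
      simp_rw [MeasurableEquiv.piFinSuccAbove_symm_apply, Fin.insertNthEquiv,
        Fin.prod_univ_succ, Fin.insertNth_zero]
      simp only [Fin.zero_succAbove, cast_eq, Function.comp_def, Fin.cons_zero, Fin.cons_succ]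
      have hI : Integrable (fun x : Fin m → ℂ => ∏ j, f (Fin.succ j) (x j))
          (Measure.pi fun j => μf (Fin.succ j)) := ih _ (fun i => hf _)
      exact Integrable.mul_prod (hf 0) hI

theorem my_integral_pi_prod (μf : Fin n → Measure ℂ) [∀ i, SigmaFinite (μf i)]
    (f : Fin n → ℂ → ℂ) :
    ∫ x : Fin n → ℂ, ∏ i, f i (x i) ∂Measure.pi μf = ∏ i, ∫ z, f i z ∂μf i := by
  induction n with
  | zero =>
      simp only [Finset.univ_eq_empty, Finset.prod_empty, integral_const,
        measureReal_def, Measure.pi_empty_univ, ENNReal.toReal_one, smul_eq_mul, mul_one, one_smul]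
  | succ m ih =>
      calc
        _ = ∫ x : ℂ × (Fin m → ℂ),
            f 0 x.1 * ∏ i : Fin m, f (Fin.succ i) (x.2 i)
              ∂(μf 0).prod (Measure.pi fun i => μf (Fin.succ i)) := by
          rw [← ((measurePreserving_piFinSuccAbove μf 0).symm).integral_comp']
          simp_rw [MeasurableEquiv.piFinSuccAbove_symm_apply, Fin.insertNthEquiv,
            Fin.prod_univ_succ, Fin.insertNth_zero, Equiv.coe_fn_mk,
            Fin.zero_succAbove, cast_eq, Fin.cons_zero, Fin.cons_succ]
        _ = (∫ z, f 0 z ∂μf 0) * ∏ i : Fin m, ∫ z, f (Fin.succ i) z ∂μf (Fin.succ i) := by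
          rw [← ih, ← integral_prod_mul]
        _ = ∏ i, ∫ z, f i z ∂μf i := by rw [Fin.prod_univ_succ]

end PiPort

section Moments

variable {K : ℕ} {l : Fin K → ℝ}

lemma prod_pow_two_indicator (v : Fin K → ℂ) (j m : Fin K) :
    ∏ i, v i ^ ((if i = j then 1 else 0) + (if i = m then 1 else 0)) = v j * v m := by
  simp_rw [pow_add]
  rw [Finset.prod_mul_distrib]
  congr 1
  · rw [Finset.prod_congr rfl (fun i _ => by
      split_ifs <;> simp : ∀ i ∈ Finset.univ,
        v i ^ (if i = j then 1 else 0) = if i = j then v i else 1)]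
    rw [Finset.prod_ite_eq' Finset.univ j v, if_pos (Finset.mem_univ j)]
  · rw [Finset.prod_congr rfl (fun i _ => by
      split_ifs <;> simp : ∀ i ∈ Finset.univ,
        v i ^ (if i = m then 1 else 0) = if i = m then v i else 1)]
    rw [Finset.prod_ite_eq' Finset.univ m v, if_pos (Finset.mem_univ m)]

lemma mono4_eq (j k m n : Fin K) (α : Fin K → ℂ) :
    α j * (starRingEnd ℂ) (α k) * (α m * (starRingEnd ℂ) (α n))
      = ∏ i, ((α i) ^ ((if i = j then 1 else 0) + (if i = m then 1 else 0))
          * ((starRingEnd ℂ) (α i)) ^ ((if i = k then 1 else 0) + (if i = n then 1 else 0))) := by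
  rw [Finset.prod_mul_distrib, prod_pow_two_indicator α j m,
    prod_pow_two_indicator (fun i => (starRingEnd ℂ) (α i)) k n]
  ring

lemma mono4_integrable (hl : ∀ i, 0 < l i) (j k m n : Fin K) :
    Integrable (fun α : Fin K → ℂ =>
        α j * (starRingEnd ℂ) (α k) * (α m * (starRingEnd ℂ) (α n)))
      (Measure.pi fun i => gaussC (l i)) := by
  haveI : ∀ i, IsProbabilityMeasure (gaussC (l i)) := fun i => gaussC_prob (hl i)
  have he : (fun α : Fin K → ℂ =>
      α j * (starRingEnd ℂ) (α k) * (α m * (starRingEnd ℂ) (α n)))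
      = fun α => ∏ i, ((α i) ^ ((if i = j then 1 else 0) + (if i = m then 1 else 0))
          * ((starRingEnd ℂ) (α i)) ^ ((if i = k then 1 else 0) + (if i = n then 1 else 0))) :=
    funext (mono4_eq j k m n)
  rw [he]
  exact my_integrable_pi_prod _ (fun i => integrable_monomial_gaussC (hl i) _ _)

lemma integral_mono4 (hl : ∀ i, 0 < l i) (j k m n : Fin K) :
    ∫ α, α j * (starRingEnd ℂ) (α k) * (α m * (starRingEnd ℂ) (α n))
        ∂(Measure.pi fun i => gaussC (l i))
      = (if j = k then 1 else 0) * (if m = n then 1 else 0) / ((l j : ℂ) * (l m : ℂ))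
        + (if j = n then 1 else 0) * (if k = m then 1 else 0) / ((l j : ℂ) * (l k : ℂ)) := by
  haveI : ∀ i, IsProbabilityMeasure (gaussC (l i)) := fun i => gaussC_prob (hl i)
  have hlc : ∀ i, (l i : ℂ) ≠ 0 := fun i => by exact_mod_cast (ne_of_gt (hl i))
  have he : (fun α : Fin K → ℂ =>
      α j * (starRingEnd ℂ) (α k) * (α m * (starRingEnd ℂ) (α n)))
      = fun α => ∏ i, ((α i) ^ ((if i = j then 1 else 0) + (if i = m then 1 else 0))
          * ((starRingEnd ℂ) (α i)) ^ ((if i = k then 1 else 0) + (if i = n then 1 else 0))) :=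
    funext (mono4_eq j k m n)
  rw [he, my_integral_pi_prod _
    (fun i z => z ^ ((if i = j then 1 else 0) + (if i = m then 1 else 0))
      * ((starRingEnd ℂ) z) ^ ((if i = k then 1 else 0) + (if i = n then 1 else 0)))]
  rw [Finset.prod_congr rfl (fun i _ => integral_monomial_gaussC (hl i) _ _)]
  by_cases h1 : j = k ∧ m = n
  · obtain ⟨rfl, rfl⟩ : j = k ∧ m = n := h1
    by_cases hjm : j = m
    · subst hjm
      rw [Finset.prod_congr rfl (fun i _ => by
          by_cases hij : i = j <;>
            simp [hij, Nat.factorial] :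
          ∀ i ∈ Finset.univ,
            (if ((if i = j then 1 else 0) + (if i = j then 1 else 0) : ℕ)
                = ((if i = j then 1 else 0) + (if i = j then 1 else 0) : ℕ) then
              ((((if i = j then 1 else 0) + (if i = j then 1 else 0) : ℕ).factorial : ℂ)
                / (l i : ℂ) ^ ((if i = j then 1 else 0) + (if i = j then 1 else 0) : ℕ))
            else 0)
            = if i = j then 2 / (l i : ℂ)^2 else 1)]
      rw [Finset.prod_ite_eq' Finset.univ j (fun i => 2 / (l i : ℂ)^2),
        if_pos (Finset.mem_univ j)]
      simp only [if_pos rfl]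
      field_simp
      norm_num
    · have hmj : ¬ m = j := fun h => hjm h.symm
      rw [Finset.prod_congr rfl (fun i _ => by
          by_cases hij : i = j <;> by_cases him : i = m
          · exact absurd (hij ▸ him) (by simpa [hij] using hjm)
          all_goals simp [hij, him, hjm, hmj, Nat.factorial] :
          ∀ i ∈ Finset.univ,
            (if ((if i = j then 1 else 0) + (if i = m then 1 else 0) : ℕ)
                = ((if i = j then 1 else 0) + (if i = m then 1 else 0) : ℕ) then
              ((((if i = j then 1 else 0) + (if i = m then 1 else 0) : ℕ).factorial : ℂ)
                / (l i : ℂ) ^ ((if i = j then 1 else 0) + (if i = m then 1 else 0) : ℕ))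
            else 0)
            = (if i = j then 1 / (l i : ℂ) else 1) * (if i = m then 1 / (l i : ℂ) else 1))]
      rw [Finset.prod_mul_distrib,
        Finset.prod_ite_eq' Finset.univ j (fun i => 1 / (l i : ℂ)),
        Finset.prod_ite_eq' Finset.univ m (fun i => 1 / (l i : ℂ)),
        if_pos (Finset.mem_univ j), if_pos (Finset.mem_univ m)]
      simp [hjm, hmj]
      ring
  · by_cases h2 : j = n ∧ k = m
    · obtain ⟨rfl, rfl⟩ : j = n ∧ k = m := ⟨h2.1, h2.2⟩
      have hjk : j ≠ k := fun h => h1 ⟨h, h.symm⟩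
      have hkj : ¬ k = j := fun h => hjk h.symm
      rw [Finset.prod_congr rfl (fun i _ => by
          by_cases hij : i = j <;> by_cases hik : i = k
          · exact absurd (hij ▸ hik) (by simpa [hij] using hjk)
          all_goals simp [hij, hik, hjk, hkj, Nat.factorial] :
          ∀ i ∈ Finset.univ,
            (if ((if i = j then 1 else 0) + (if i = k then 1 else 0) : ℕ)
                = ((if i = k then 1 else 0) + (if i = j then 1 else 0) : ℕ) then
              ((((if i = j then 1 else 0) + (if i = k then 1 else 0) : ℕ).factorial : ℂ)
                / (l i : ℂ) ^ ((if i = j then 1 else 0) + (if i = k then 1 else 0) : ℕ))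
            else 0)
            = (if i = j then 1 / (l i : ℂ) else 1) * (if i = k then 1 / (l i : ℂ) else 1))]
      rw [Finset.prod_mul_distrib,
        Finset.prod_ite_eq' Finset.univ j (fun i => 1 / (l i : ℂ)),
        Finset.prod_ite_eq' Finset.univ k (fun i => 1 / (l i : ℂ)),
        if_pos (Finset.mem_univ j), if_pos (Finset.mem_univ k)]
      simp [hjk, hkj]
      ring
    · obtain ⟨i0, hi0⟩ : ∃ i0 : Fin K,
          ((if i0 = j then 1 else 0) + (if i0 = m then 1 else 0) : ℕ)
            ≠ ((if i0 = k then 1 else 0) + (if i0 = n then 1 else 0) : ℕ) := by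
        by_cases hjk : j = k
        · subst hjk
          have hmn : m ≠ n := fun h => h1 ⟨rfl, h⟩
          refine ⟨n, ?_⟩
          have hnm : ¬ n = m := fun h => hmn h.symm
          by_cases hnj : n = j
          · simp [hnj, hnm, show ¬ j = m from fun h => hmn (h.symm.trans hnj.symm)]
          · simp [hnj, hnm]
        · by_cases hjn : j = n
          · subst hjn
            have hkm : k ≠ m := fun h => h2 ⟨rfl, h⟩
            refine ⟨k, ?_⟩
            have hkj : ¬ k = j := fun h => hjk h.symm
            simp [hkj, hkm]
          · refine ⟨j, ?_⟩
            by_cases hjm : j = m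
            · simp [hjm, hjk, hjn, show ¬ m = k from fun h => hjk (hjm.trans h),
                show ¬ m = n from fun h => hjn (hjm.trans h)]
            · simp [hjm, hjk, hjn]
      have hA : (if j = k then (1:ℂ) else 0) * (if m = n then 1 else 0) = 0 := by
        by_cases h : j = k
        · have : m ≠ n := fun hh => h1 ⟨h, hh⟩
          simp [this]
        · simp [h]
      have hB : (if j = n then (1:ℂ) else 0) * (if k = m then 1 else 0) = 0 := by
        by_cases h : j = n
        · have : k ≠ m := fun hh => h2 ⟨h, hh⟩
          simp [this]
        · simp [h]
      rw [hA, hB]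
      simp only [zero_div, add_zero]
      exact Finset.prod_eq_zero (Finset.mem_univ i0) (if_neg hi0)

end Moments

section Moments2

variable {K : ℕ} {l : Fin K → ℝ}

lemma prod_pow_one_indicator (v : Fin K → ℂ) (j : Fin K) :
    ∏ i, v i ^ (if i = j then 1 else 0) = v j := by
  rw [Finset.prod_congr rfl (fun i _ => by
      split_ifs <;> simp : ∀ i ∈ Finset.univ,
        v i ^ (if i = j then 1 else 0) = if i = j then v i else 1)]
  rw [Finset.prod_ite_eq' Finset.univ j v, if_pos (Finset.mem_univ j)]

lemma mono2_eq (j k : Fin K) (α : Fin K → ℂ) :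
    α j * (starRingEnd ℂ) (α k)
      = ∏ i, ((α i) ^ (if i = j then 1 else 0)
          * ((starRingEnd ℂ) (α i)) ^ (if i = k then 1 else 0)) := by
  rw [Finset.prod_mul_distrib, prod_pow_one_indicator α j,
    prod_pow_one_indicator (fun i => (starRingEnd ℂ) (α i)) k]

lemma mono2_integrable (hl : ∀ i, 0 < l i) (j k : Fin K) :
    Integrable (fun α : Fin K → ℂ => α j * (starRingEnd ℂ) (α k))
      (Measure.pi fun i => gaussC (l i)) := by
  haveI : ∀ i, IsProbabilityMeasure (gaussC (l i)) := fun i => gaussC_prob (hl i)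
  have he : (fun α : Fin K → ℂ => α j * (starRingEnd ℂ) (α k))
      = fun α => ∏ i, ((α i) ^ (if i = j then 1 else 0)
          * ((starRingEnd ℂ) (α i)) ^ (if i = k then 1 else 0)) := funext (mono2_eq j k)
  rw [he]
  exact my_integrable_pi_prod _ (fun i => integrable_monomial_gaussC (hl i) _ _)

lemma integral_mono2 (hl : ∀ i, 0 < l i) (j k : Fin K) :
    ∫ α, α j * (starRingEnd ℂ) (α k) ∂(Measure.pi fun i => gaussC (l i))
      = (if j = k then 1 else 0) / (l j : ℂ) := by
  haveI : ∀ i, IsProbabilityMeasure (gaussC (l i)) := fun i => gaussC_prob (hl i)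
  have he : (fun α : Fin K → ℂ => α j * (starRingEnd ℂ) (α k))
      = fun α => ∏ i, ((α i) ^ (if i = j then 1 else 0)
          * ((starRingEnd ℂ) (α i)) ^ (if i = k then 1 else 0)) := funext (mono2_eq j k)
  rw [he, my_integral_pi_prod _
    (fun i z => z ^ (if i = j then 1 else 0)
      * ((starRingEnd ℂ) z) ^ (if i = k then 1 else 0))]
  rw [Finset.prod_congr rfl (fun i _ => integral_monomial_gaussC (hl i) _ _)]
  by_cases hjk : j = k
  · subst hjk
    rw [Finset.prod_congr rfl (fun i _ => by
        by_cases hij : i = j <;> simp [hij, Nat.factorial] :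
        ∀ i ∈ Finset.univ,
          (if ((if i = j then 1 else 0) : ℕ) = ((if i = j then 1 else 0) : ℕ) then
            ((((if i = j then 1 else 0) : ℕ).factorial : ℂ)
              / (l i : ℂ) ^ ((if i = j then 1 else 0) : ℕ))
          else 0)
          = if i = j then 1 / (l i : ℂ) else 1)]
    rw [Finset.prod_ite_eq' Finset.univ j (fun i => 1 / (l i : ℂ)),
      if_pos (Finset.mem_univ j)]
    simp
  · have : ((if j = j then 1 else 0 : ℕ)) ≠ ((if j = k then 1 else 0 : ℕ)) := by
      simp [hjk]
    rw [if_neg hjk]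
    simp only [zero_div]
    exact Finset.prod_eq_zero (Finset.mem_univ j) (if_neg this)

def cjk {K : ℕ} (l : Fin K → ℝ) (j k : Fin K) (α : Fin K → ℂ) : ℂ :=
  α j * (starRingEnd ℂ) (α k) - (if j = k then (1:ℂ) / (l j : ℂ) else 0)

lemma cc_eq (j k m n : Fin K) (α : Fin K → ℂ) :
    cjk l j k α * cjk l m n α
      = α j * (starRingEnd ℂ) (α k) * (α m * (starRingEnd ℂ) (α n))
        - (if j = k then (1:ℂ) / (l j : ℂ) else 0) * (α m * (starRingEnd ℂ) (α n))
        - (if m = n then (1:ℂ) / (l m : ℂ) else 0) * (α j * (starRingEnd ℂ) (α k))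
        + (if j = k then (1:ℂ) / (l j : ℂ) else 0)
          * (if m = n then (1:ℂ) / (l m : ℂ) else 0) := by
  unfold cjk
  ring

lemma cc_integrable (hl : ∀ i, 0 < l i) (j k m n : Fin K) :
    Integrable (fun α : Fin K → ℂ => cjk l j k α * cjk l m n α)
      (Measure.pi fun i => gaussC (l i)) := by
  haveI : ∀ i, IsProbabilityMeasure (gaussC (l i)) := fun i => gaussC_prob (hl i)
  have he : (fun α : Fin K → ℂ => cjk l j k α * cjk l m n α)
      = fun α => α j * (starRingEnd ℂ) (α k) * (α m * (starRingEnd ℂ) (α n))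
        - (if j = k then (1:ℂ) / (l j : ℂ) else 0) * (α m * (starRingEnd ℂ) (α n))
        - (if m = n then (1:ℂ) / (l m : ℂ) else 0) * (α j * (starRingEnd ℂ) (α k))
        + (if j = k then (1:ℂ) / (l j : ℂ) else 0)
          * (if m = n then (1:ℂ) / (l m : ℂ) else 0) := funext (cc_eq j k m n)
  rw [he]
  exact (((mono4_integrable hl j k m n).sub
    ((mono2_integrable hl m n).const_mul _)).sub
    ((mono2_integrable hl j k).const_mul _)).add (integrable_const _)

lemma integral_cc (hl : ∀ i, 0 < l i) (j k m n : Fin K) :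
    ∫ α, cjk l j k α * cjk l m n α ∂(Measure.pi fun i => gaussC (l i))
      = (if j = n then 1 else 0) * (if k = m then 1 else 0) / ((l j : ℂ) * (l k : ℂ)) := by
  haveI : ∀ i, IsProbabilityMeasure (gaussC (l i)) := fun i => gaussC_prob (hl i)
  have he : (fun α : Fin K → ℂ => cjk l j k α * cjk l m n α)
      = fun α => α j * (starRingEnd ℂ) (α k) * (α m * (starRingEnd ℂ) (α n))
        - (if j = k then (1:ℂ) / (l j : ℂ) else 0) * (α m * (starRingEnd ℂ) (α n))
        - (if m = n then (1:ℂ) / (l m : ℂ) else 0) * (α j * (starRingEnd ℂ) (α k))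
        + (if j = k then (1:ℂ) / (l j : ℂ) else 0)
          * (if m = n then (1:ℂ) / (l m : ℂ) else 0) := funext (cc_eq j k m n)
  rw [he]
  set A : (Fin K → ℂ) → ℂ := fun α => α j * (starRingEnd ℂ) (α k) * (α m * (starRingEnd ℂ) (α n)) with hA
  set B : (Fin K → ℂ) → ℂ := fun α =>
    (if j = k then (1:ℂ) / (l j : ℂ) else 0) * (α m * (starRingEnd ℂ) (α n)) with hB
  set C : (Fin K → ℂ) → ℂ := fun α =>
    (if m = n then (1:ℂ) / (l m : ℂ) else 0) * (α j * (starRingEnd ℂ) (α k)) with hC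
  have hIA : Integrable A (Measure.pi fun i => gaussC (l i)) := mono4_integrable hl j k m n
  have hIB : Integrable B (Measure.pi fun i => gaussC (l i)) :=
    (mono2_integrable hl m n).const_mul _
  have hIC : Integrable C (Measure.pi fun i => gaussC (l i)) :=
    (mono2_integrable hl j k).const_mul _
  have h1 : Integrable (fun α => A α - B α) (Measure.pi fun i => gaussC (l i)) := by
    exact hIA.sub hIB
  have h2 : Integrable (fun α => A α - B α - C α) (Measure.pi fun i => gaussC (l i)) := by
    exact h1.sub hIC
  rw [integral_add h2 (integrable_const _), integral_sub h1 hIC, integral_sub hIA hIB,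
    integral_const]
  rw [hA, hB, hC]
  haveI : IsProbabilityMeasure (Measure.pi fun i => gaussC (l i)) := by infer_instance
  rw [integral_const_mul, integral_const_mul, integral_mono4 hl j k m n,
    integral_mono2 hl m n, integral_mono2 hl j k]
  simp only [measureReal_def, measure_univ, ENNReal.toReal_one, one_smul]
  by_cases hjk : j = k <;> by_cases hmn : m = n <;> simp [hjk, hmn] <;> ring
end Moments2

section Assembly

variable {d K : ℕ} {u : Fin K → EuclideanSpace ℝ (Fin d) → ℂ}
  {l : Fin K → ℝ} {w : EuclideanSpace ℝ (Fin d) → ℝ} {C : ℝ}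

-- integrability of u_j * conj u_k
lemma int_uu (hmeas : ∀ j, Measurable (u j))
    (hL2 : ∀ j, MemLp (u j) 2 (volume : Measure (EuclideanSpace ℝ (Fin d))))
    (j k : Fin K) :
    Integrable (fun x => u j x * (starRingEnd ℂ) (u k x))
      (volume : Measure (EuclideanSpace ℝ (Fin d))) := by
  have h2 : ∀ i : Fin K, Integrable (fun x => ‖u i x‖ ^ 2)
      (volume : Measure (EuclideanSpace ℝ (Fin d))) := fun i =>
    (memLp_two_iff_integrable_sq_norm (hL2 i).aestronglyMeasurable).mp (hL2 i)
  have hdom : Integrable (fun x => (1/2 : ℝ) * (‖u j x‖^2 + ‖u k x‖^2))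
      (volume : Measure (EuclideanSpace ℝ (Fin d))) := ((h2 j).add (h2 k)).const_mul _
  apply hdom.mono'
  · exact ((hmeas j).mul (Complex.continuous_conj.measurable.comp (hmeas k))).aestronglyMeasurable
  · filter_upwards with x
    rw [norm_mul, RCLike.norm_conj]
    nlinarith [sq_nonneg (‖u j x‖ - ‖u k x‖), norm_nonneg (u j x), norm_nonneg (u k x)]

def kern (u : Fin K → EuclideanSpace ℝ (Fin d) → ℂ) (w : EuclideanSpace ℝ (Fin d) → ℝ)
    (j k m n : Fin K)
    (q : EuclideanSpace ℝ (Fin d) × EuclideanSpace ℝ (Fin d)) : ℂ :=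
  (w (q.1 - q.2) : ℂ) *
    (u j q.1 * (starRingEnd ℂ) (u k q.1) * (u m q.2 * (starRingEnd ℂ) (u n q.2)))

lemma kern_integrable (hmeas : ∀ j, Measurable (u j))
    (hL2 : ∀ j, MemLp (u j) 2 (volume : Measure (EuclideanSpace ℝ (Fin d))))
    (hw_meas : Measurable w)
    (hw_bd : ∀ᵐ x ∂(volume : Measure (EuclideanSpace ℝ (Fin d))), |w x| ≤ C)
    (j k m n : Fin K) :
    Integrable (kern u w j k m n)
      (volume : Measure (EuclideanSpace ℝ (Fin d) × EuclideanSpace ℝ (Fin d))) := by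
  have h0 : Integrable (fun q : EuclideanSpace ℝ (Fin d) × EuclideanSpace ℝ (Fin d) =>
      (u j q.1 * (starRingEnd ℂ) (u k q.1)) * (u m q.2 * (starRingEnd ℂ) (u n q.2)))
      (volume : Measure (EuclideanSpace ℝ (Fin d) × EuclideanSpace ℝ (Fin d))) := by
    rw [Measure.volume_eq_prod]
    exact (int_uu hmeas hL2 j k).mul_prod (int_uu hmeas hL2 m n)
  have hbd : ∀ᵐ q ∂(volume : Measure (EuclideanSpace ℝ (Fin d) × EuclideanSpace ℝ (Fin d))),
      ‖(w (q.1 - q.2) : ℂ)‖ ≤ C := by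
    have hq : Measure.QuasiMeasurePreserving
        (fun q : EuclideanSpace ℝ (Fin d) × EuclideanSpace ℝ (Fin d) => q.1 - q.2)
        ((volume : Measure (EuclideanSpace ℝ (Fin d))).prod volume)
        (volume : Measure (EuclideanSpace ℝ (Fin d))) :=
      quasiMeasurePreserving_sub_of_right_invariant _ _
    rw [Measure.volume_eq_prod]
    filter_upwards [hq.ae hw_bd] with q hqq
    rwa [Complex.norm_real, Real.norm_eq_abs]
  exact h0.bdd_mul
    ((Complex.measurable_ofReal.comp (hw_meas.comp (measurable_fst.sub measurable_snd))).aestronglyMeasurable)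
    hbd

lemma fFin_expand (hl : ∀ i, 0 < l i) (α : Fin K → ℂ) (x : EuclideanSpace ℝ (Fin d)) :
    ((fFin d K u l α x : ℝ) : ℂ)
      = ∑ j, ∑ k, cjk l j k α * (u j x * (starRingEnd ℂ) (u k x)) := by
  have hsq : ∀ z : ℂ, ((‖z‖^2 : ℝ) : ℂ) = z * (starRingEnd ℂ) z := by
    intro z
    rw [Complex.mul_conj, Complex.normSq_eq_norm_sq]
  unfold fFin rhoFin
  rw [Complex.ofReal_sub, hsq (∑ j, α j * u j x)]
  push_cast
  have hS : (∑ j, α j * u j x) * (starRingEnd ℂ) (∑ j, α j * u j x)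
      = ∑ j, ∑ k, (α j * (starRingEnd ℂ) (α k)) * (u j x * (starRingEnd ℂ) (u k x)) := by
    rw [map_sum, Finset.sum_mul_sum]
    refine Finset.sum_congr rfl fun j _ => Finset.sum_congr rfl fun k _ => ?_
    rw [map_mul, mul_mul_mul_comm]
  have hρ : ∑ j, (((‖u j x‖:ℂ))^2 / ((l j : ℝ) : ℂ))
      = ∑ j, ∑ k, (if j = k then (1:ℂ) / (l j : ℂ) else 0)
          * (u j x * (starRingEnd ℂ) (u k x)) := by
    refine Finset.sum_congr rfl fun j _ => ?_
    rw [Finset.sum_congr rfl (fun k _ => by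
        split_ifs with h
        · subst h; rfl
        · rw [zero_mul] :
      ∀ k ∈ Finset.univ, (if j = k then (1:ℂ) / (l j : ℂ) else 0)
          * (u j x * (starRingEnd ℂ) (u k x))
        = if j = k then (1 / (l j : ℂ)) * (u j x * (starRingEnd ℂ) (u j x)) else 0)]
    rw [Finset.sum_ite_eq Finset.univ j
      (fun k => (1 / (l j : ℂ)) * (u j x * (starRingEnd ℂ) (u j x))),
      if_pos (Finset.mem_univ j)]
    rw [show ((‖u j x‖:ℂ))^2 = ((‖u j x‖^2 : ℝ) : ℂ) by push_cast; ring, hsq (u j x)]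
    ring
  rw [hS, hρ, ← Finset.sum_sub_distrib]
  refine Finset.sum_congr rfl fun j _ => ?_
  rw [← Finset.sum_sub_distrib]
  refine Finset.sum_congr rfl fun k _ => ?_
  unfold cjk
  ring

lemma point_expand (hl : ∀ i, 0 < l i) (α : Fin K → ℂ)
    (q : EuclideanSpace ℝ (Fin d) × EuclideanSpace ℝ (Fin d)) :
    ((fFin d K u l α q.1 * w (q.1 - q.2) * fFin d K u l α q.2 : ℝ) : ℂ)
      = ∑ j, ∑ k, ∑ m, ∑ n,
          cjk l j k α * cjk l m n α * kern u w j k m n q := by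
  push_cast
  rw [fFin_expand hl α q.1, fFin_expand hl α q.2]
  rw [Finset.sum_mul, Finset.sum_mul]
  refine Finset.sum_congr rfl fun j _ => ?_
  rw [Finset.sum_mul, Finset.sum_mul]
  refine Finset.sum_congr rfl fun k _ => ?_
  rw [Finset.mul_sum]
  refine Finset.sum_congr rfl fun m _ => ?_
  rw [Finset.mul_sum]
  refine Finset.sum_congr rfl fun n _ => ?_
  unfold kern
  ring

lemma DR_point (hl : ∀ i, 0 < l i)
    (hmeas : ∀ j, Measurable (u j))
    (hL2 : ∀ j, MemLp (u j) 2 (volume : Measure (EuclideanSpace ℝ (Fin d))))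
    (hw_meas : Measurable w)
    (hw_bd : ∀ᵐ x ∂(volume : Measure (EuclideanSpace ℝ (Fin d))), |w x| ≤ C)
    (α : Fin K → ℂ) :
    DRFin d K u l w α
      = (1/2) * (∑ j, ∑ k, ∑ m, ∑ n,
          cjk l j k α * cjk l m n α * ∫ q, kern u w j k m n q).re := by
  have hki : ∀ j k m n : Fin K, Integrable (kern u w j k m n)
      (volume : Measure (EuclideanSpace ℝ (Fin d) × EuclideanSpace ℝ (Fin d))) :=
    fun j k m n => kern_integrable hmeas hL2 hw_meas hw_bd j k m n
  have hcomp : ((∫ q : EuclideanSpace ℝ (Fin d) × EuclideanSpace ℝ (Fin d),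
      fFin d K u l α q.1 * w (q.1 - q.2) * fFin d K u l α q.2 : ℝ) : ℂ)
      = ∑ j, ∑ k, ∑ m, ∑ n,
          cjk l j k α * cjk l m n α * ∫ q, kern u w j k m n q := by
    rw [show ((∫ q : EuclideanSpace ℝ (Fin d) × EuclideanSpace ℝ (Fin d),
        fFin d K u l α q.1 * w (q.1 - q.2) * fFin d K u l α q.2 : ℝ) : ℂ)
      = ∫ q : EuclideanSpace ℝ (Fin d) × EuclideanSpace ℝ (Fin d),
          ((fFin d K u l α q.1 * w (q.1 - q.2) * fFin d K u l α q.2 : ℝ) : ℂ)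
      from integral_ofReal.symm]
    rw [integral_congr_ae (ae_of_all _ (point_expand hl α))]
    rw [integral_finset_sum _ (fun j _ => integrable_finset_sum _
      (fun k _ => integrable_finset_sum _ (fun m _ => integrable_finset_sum _
      (fun n _ => (hki j k m n).const_mul _))))]
    refine Finset.sum_congr rfl fun j _ => ?_
    rw [integral_finset_sum _ (fun k _ => integrable_finset_sum _
      (fun m _ => integrable_finset_sum _ (fun n _ => (hki j k m n).const_mul _)))]
    refine Finset.sum_congr rfl fun k _ => ?_
    rw [integral_finset_sum _ (fun m _ => integrable_finset_sum _
      (fun n _ => (hki j k m n).const_mul _))]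
    refine Finset.sum_congr rfl fun m _ => ?_
    rw [integral_finset_sum _ (fun n _ => (hki j k m n).const_mul _)]
    refine Finset.sum_congr rfl fun n _ => ?_
    exact integral_const_mul _ _
  unfold DRFin
  congr 1
  rw [← hcomp, Complex.ofReal_re]

lemma ofReal_norm_sq (z : ℂ) : ((‖z‖^2 : ℝ) : ℂ) = z * (starRingEnd ℂ) z := by
  rw [Complex.mul_conj, Complex.normSq_eq_norm_sq]

lemma green_sum (hl : ∀ i, 0 < l i)
    (hmeas : ∀ j, Measurable (u j))
    (hL2 : ∀ j, MemLp (u j) 2 (volume : Measure (EuclideanSpace ℝ (Fin d))))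
    (hw_meas : Measurable w)
    (hw_bd : ∀ᵐ x ∂(volume : Measure (EuclideanSpace ℝ (Fin d))), |w x| ≤ C) :
    ∑ j, ∑ k, (1 / ((l j : ℂ) * (l k : ℂ))) * ∫ q, kern u w j k k j q
      = ((∫ q : EuclideanSpace ℝ (Fin d) × EuclideanSpace ℝ (Fin d),
          ‖greenFin d K u l q.1 q.2‖^2 * w (q.1 - q.2) : ℝ) : ℂ) := by
  have hki : ∀ j k m n : Fin K, Integrable (kern u w j k m n)
      (volume : Measure (EuclideanSpace ℝ (Fin d) × EuclideanSpace ℝ (Fin d))) :=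
    fun j k m n => kern_integrable hmeas hL2 hw_meas hw_bd j k m n
  have h1 : ∀ q : EuclideanSpace ℝ (Fin d) × EuclideanSpace ℝ (Fin d),
      ((‖greenFin d K u l q.1 q.2‖^2 * w (q.1 - q.2) : ℝ) : ℂ)
        = ∑ j, ∑ k, (1 / ((l j : ℂ) * (l k : ℂ))) * kern u w j k k j q := by
    intro q
    rw [Complex.ofReal_mul, ofReal_norm_sq]
    unfold greenFin
    rw [map_sum, Finset.sum_mul_sum, Finset.sum_mul]
    refine Finset.sum_congr rfl fun j _ => ?_
    rw [Finset.sum_mul]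
    refine Finset.sum_congr rfl fun k _ => ?_
    rw [map_div₀, map_mul, Complex.conj_conj, Complex.conj_ofReal]
    unfold kern
    ring
  rw [show ((∫ q : EuclideanSpace ℝ (Fin d) × EuclideanSpace ℝ (Fin d),
      ‖greenFin d K u l q.1 q.2‖^2 * w (q.1 - q.2) : ℝ) : ℂ)
    = ∫ q : EuclideanSpace ℝ (Fin d) × EuclideanSpace ℝ (Fin d),
        ((‖greenFin d K u l q.1 q.2‖^2 * w (q.1 - q.2) : ℝ) : ℂ)
    from integral_ofReal.symm]
  rw [integral_congr_ae (ae_of_all _ h1)]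
  rw [integral_finset_sum _ (fun j _ => integrable_finset_sum _
    (fun k _ => (hki j k k j).const_mul _))]
  refine (Finset.sum_congr rfl fun j _ => ?_).symm
  rw [integral_finset_sum _ (fun k _ => (hki j k k j).const_mul _)]
  refine Finset.sum_congr rfl fun k _ => ?_
  exact integral_const_mul _ _

/-- The Gaussian expectation of the renormalized interaction equals
the exchange term only:
`∫ 𝒟^R_K dμ₀ = ½ ∬ |G_K(x,y)|² w(x−y) dx dy`. -/
theorem expectation_renormalized_interaction_eq_exchange
    (d K : ℕ) (u : Fin K → EuclideanSpace ℝ (Fin d) → ℂ)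
    (hmeas : ∀ j, Measurable (u j))
    (hL2 : ∀ j, MemLp (u j) 2 (volume : Measure (EuclideanSpace ℝ (Fin d))))
    (l : Fin K → ℝ) (hl : ∀ j, 0 < l j)
    (w : EuclideanSpace ℝ (Fin d) → ℝ) (hw_meas : Measurable w)
    (hw_even : ∀ x, w (-x) = w x)
    (C : ℝ) (hw_bd : ∀ᵐ x ∂(volume : Measure (EuclideanSpace ℝ (Fin d))), |w x| ≤ C) :
    ∫ α : Fin K → ℂ, DRFin d K u l w α ∂(Measure.pi fun j => gaussC (l j))
      = (1 / 2) * ∫ q : EuclideanSpace ℝ (Fin d) × EuclideanSpace ℝ (Fin d),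
          ‖greenFin d K u l q.1 q.2‖ ^ 2 * w (q.1 - q.2) := by
  haveI : ∀ i, IsProbabilityMeasure (gaussC (l i)) := fun i => gaussC_prob (hl i)
  rw [integral_congr_ae (ae_of_all _ (DR_point hl hmeas hL2 hw_meas hw_bd))]
  rw [integral_const_mul]
  congr 1
  have hSint : Integrable (fun α : Fin K → ℂ => ∑ j, ∑ k, ∑ m, ∑ n,
      cjk l j k α * cjk l m n α * ∫ q, kern u w j k m n q)
      (Measure.pi fun i => gaussC (l i)) :=
    integrable_finset_sum _ (fun j _ => integrable_finset_sum _
      (fun k _ => integrable_finset_sum _ (fun m _ => integrable_finset_sum _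
      (fun n _ => (cc_integrable hl j k m n).mul_const _))))
  have hre := integral_re hSint
  simp only [RCLike.re_to_complex] at hre
  rw [hre]
  have hswap : ∫ α, (∑ j, ∑ k, ∑ m, ∑ n,
      cjk l j k α * cjk l m n α * ∫ q, kern u w j k m n q)
      ∂(Measure.pi fun i => gaussC (l i))
      = ∑ j, ∑ k, ∑ m, ∑ n,
        (∫ α, cjk l j k α * cjk l m n α ∂(Measure.pi fun i => gaussC (l i)))
          * ∫ q, kern u w j k m n q := by
    rw [integral_finset_sum _ (fun j _ => integrable_finset_sum _
      (fun k _ => integrable_finset_sum _ (fun m _ => integrable_finset_sum _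
      (fun n _ => (cc_integrable hl j k m n).mul_const _))))]
    refine Finset.sum_congr rfl fun j _ => ?_
    rw [integral_finset_sum _ (fun k _ => integrable_finset_sum _
      (fun m _ => integrable_finset_sum _ (fun n _ => (cc_integrable hl j k m n).mul_const _)))]
    refine Finset.sum_congr rfl fun k _ => ?_
    rw [integral_finset_sum _ (fun m _ => integrable_finset_sum _
      (fun n _ => (cc_integrable hl j k m n).mul_const _))]
    refine Finset.sum_congr rfl fun m _ => ?_
    rw [integral_finset_sum _ (fun n _ => (cc_integrable hl j k m n).mul_const _)]
    refine Finset.sum_congr rfl fun n _ => ?_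
    exact integral_mul_const _ _
  rw [hswap]
  rw [Finset.sum_congr rfl (fun j _ => Finset.sum_congr rfl (fun k _ =>
    Finset.sum_congr rfl (fun m _ => Finset.sum_congr rfl (fun n _ => by
      rw [integral_cc hl j k m n]))))]
  have hcollapse : ∑ j, ∑ k, ∑ m, ∑ n,
      ((if j = n then (1:ℂ) else 0) * (if k = m then 1 else 0) / ((l j : ℂ) * (l k : ℂ)))
        * ∫ q, kern u w j k m n q
      = ∑ j, ∑ k, (1 / ((l j : ℂ) * (l k : ℂ))) * ∫ q, kern u w j k k j q := by
    refine Finset.sum_congr rfl fun j _ => Finset.sum_congr rfl fun k _ => ?_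
    rw [Finset.sum_congr rfl (fun m _ => Finset.sum_congr rfl (fun n _ => by
      split_ifs with h1 h2 <;> simp [h1] <;> try ring :
      ∀ n ∈ Finset.univ,
        ((if j = n then (1:ℂ) else 0) * (if k = m then 1 else 0) / ((l j : ℂ) * (l k : ℂ)))
          * ∫ q, kern u w j k m n q
        = if k = m then (if j = n then
            (1 / ((l j : ℂ) * (l k : ℂ))) * ∫ q, kern u w j k m n q else 0) else 0))]
    rw [Finset.sum_congr rfl (fun m _ => by
      split_ifs with h
      · rfl
      · exact Finset.sum_const_zero :
      ∀ m ∈ Finset.univ,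
        (∑ n, if k = m then (if j = n then
            (1 / ((l j : ℂ) * (l k : ℂ))) * ∫ q, kern u w j k m n q else 0) else 0)
        = if k = m then (∑ n, if j = n then
            (1 / ((l j : ℂ) * (l k : ℂ))) * ∫ q, kern u w j k m n q else 0) else 0)]
    rw [Finset.sum_ite_eq Finset.univ k (fun m => ∑ n, if j = n then
      (1 / ((l j : ℂ) * (l k : ℂ))) * ∫ q, kern u w j k m n q else 0),
      if_pos (Finset.mem_univ k)]
    rw [Finset.sum_ite_eq Finset.univ j (fun n =>
      (1 / ((l j : ℂ) * (l k : ℂ))) * ∫ q, kern u w j k k n q),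
      if_pos (Finset.mem_univ j)]
  rw [hcollapse, green_sum hl hmeas hL2 hw_meas hw_bd]
  exact Complex.ofReal_re _

end Assembly
end
end

section
/- Let n ≥ 1, T > 0, and let h be an n×n positive definite Hermitian complex matrix. For an n×n positive semidefinite Hermitian matrix γ define the bosonic entropy S(γ) := Tr[(1+γ)·log(1+γ) − γ·log γ]. Then for every positive semidefinite Hermitian γ: Tr(hγ) − T·S(γ) ≥ T · Tr(log(1 − exp(−h/T))), with equality if and only if γ = (exp(h/T) − 1)^{−1}. -/
open MeasureTheory Filter Topology
open scoped ComplexOrder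

noncomputable section

/-- For a Hermitian matrix `γ`, the trace `Tr f(γ)` of `f` applied to `γ` by the
functional calculus, computed as `Σ_i f(μ_i)` over the eigenvalues `μ_i` of `γ`
(junk value `0` for non-Hermitian matrices). Note that Lean's convention
`Real.log 0 = 0` implements the convention `0·log 0 = 0`. -/
def specSum (n : ℕ) (f : ℝ → ℝ) (γ : Matrix (Fin n) (Fin n) ℂ) : ℝ :=
  if h : γ.IsHermitian then ∑ i, f (h.eigenvalues i) else 0

/-- The bosonic entropy `S(γ) = Tr[(1+γ)·log(1+γ) − γ·log γ]`. -/
def bosonicEntropy (n : ℕ) (γ : Matrix (Fin n) (Fin n) ℂ) : ℝ :=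
  specSum n (fun x => (1 + x) * Real.log (1 + x) - x * Real.log x) γ

lemma scalar_core {β g : ℝ} (hβ : 0 < β) (hg : 0 ≤ g) :
    0 ≤ β * g + g * Real.log g - (1 + g) * Real.log (1 + g)
        - Real.log (1 - Real.exp (-β)) ∧
    (β * g + g * Real.log g - (1 + g) * Real.log (1 + g)
        - Real.log (1 - Real.exp (-β)) = 0 ↔ g = (Real.exp β - 1)⁻¹) := by
  have hE : 1 < Real.exp β := by
    rw [← Real.exp_zero]; exact Real.exp_lt_exp.mpr hβ
  set E := Real.exp β with hEdef
  have hE0 : 0 < E := lt_trans one_pos hE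
  have hE1 : 0 < E - 1 := by linarith
  set s : ℝ := (E - 1)⁻¹ with hsdef
  have hs : 0 < s := inv_pos.2 hE1
  have h1s : 1 + s = E / (E - 1) := by rw [hsdef]; field_simp; ring
  -- log(1 − e^{−β}) = − log(1+s)
  have hexpneg : Real.exp (-β) = E⁻¹ := by rw [Real.exp_neg]
  have hlog : Real.log (1 - Real.exp (-β)) = - Real.log (1 + s) := by
    rw [hexpneg, h1s]
    have : (1 : ℝ) - E⁻¹ = (E - 1) / E := by field_simp
    rw [this, Real.log_div hE1.ne' hE0.ne', Real.log_div hE0.ne' hE1.ne']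
    ring
  -- β = log(1+s) − log s
  have hβlog : β = Real.log (1 + s) - Real.log s := by
    rw [h1s, hsdef, Real.log_div hE0.ne' hE1.ne', Real.log_inv, Real.log_exp]
    ring
  have h1g : (0:ℝ) < 1 + g := by linarith
  have h1s' : (0:ℝ) < 1 + s := by linarith
  -- main: Φ ≥ 0 and = 0 iff g = s
  have key : ∀ _ : g ≠ s, 0 < β * g + g * Real.log g - (1 + g) * Real.log (1 + g)
      - Real.log (1 - Real.exp (-β)) := by
    intro hne
    rw [hlog]
    rcases eq_or_lt_of_le hg with rfl | hg0
    · simp only [Real.log_zero, mul_zero, zero_mul, add_zero, zero_add, Real.log_one]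
      have := Real.log_pos (by linarith : (1:ℝ) < 1 + s)
      linarith
    · set u : ℝ := g * (1 + s) / (s * (1 + g)) with hu
      set v : ℝ := (1 + s) / (1 + g) with hv
      have hu0 : 0 < u := by positivity
      have hv0 : 0 < v := by positivity
      have hGu : β * g + g * Real.log g - (1 + g) * Real.log (1 + g) - -Real.log (1 + s)
          = g * Real.log u + Real.log v := by
        rw [hβlog, hu, hv, Real.log_div (by positivity) (by positivity),
          Real.log_mul hg0.ne' h1s'.ne', Real.log_mul hs.ne' h1g.ne',
          Real.log_div h1s'.ne' h1g.ne']
        ring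
      rw [hGu]
      have b1 : 1 - u⁻¹ ≤ Real.log u := Real.one_sub_inv_le_log_of_pos hu0
      have hvne : v ≠ 1 := by
        intro h1
        rw [hv, div_eq_one_iff_eq h1g.ne'] at h1
        exact hne (by linarith)
      have b2 : 1 - v⁻¹ < Real.log v := by
        have := Real.log_lt_sub_one_of_pos (inv_pos.2 hv0) (by
          simpa [inv_eq_one] using hvne)
        rw [Real.log_inv] at this
        linarith
      have alg : g * (1 - u⁻¹) + (1 - v⁻¹) = 0 := by
        rw [hu, hv]
        field_simp
        ring
      have b1' : g * (1 - u⁻¹) ≤ g * Real.log u :=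
        mul_le_mul_of_nonneg_left b1 hg0.le
      linarith
  have keyz : g = s → β * g + g * Real.log g - (1 + g) * Real.log (1 + g)
      - Real.log (1 - Real.exp (-β)) = 0 := by
    rintro rfl
    rw [hlog, hβlog]
    ring
  constructor
  · rcases eq_or_ne g s with rfl | hne
    · exact (keyz rfl).ge
    · exact (key hne).le
  · constructor
    · intro hz
      by_contra hne
      exact absurd hz (ne_of_gt (key hne))
    · exact keyz

/-- Bridge to the free-energy form. -/
lemma scalar_bridge {T e g : ℝ} (hT : 0 < T) (he : 0 < e) (hg : 0 ≤ g) :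
    T * Real.log (1 - Real.exp (-e / T))
      ≤ e * g - T * ((1 + g) * Real.log (1 + g) - g * Real.log g) ∧
    (e * g - T * ((1 + g) * Real.log (1 + g) - g * Real.log g)
        = T * Real.log (1 - Real.exp (-e / T)) ↔ g = (Real.exp (e / T) - 1)⁻¹) := by
  have hβ : 0 < e / T := div_pos he hT
  obtain ⟨h1, h2⟩ := scalar_core hβ hg
  have hid : e * g - T * ((1 + g) * Real.log (1 + g) - g * Real.log g)
      - T * Real.log (1 - Real.exp (-e / T))
      = T * (e / T * g + g * Real.log g - (1 + g) * Real.log (1 + g)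
          - Real.log (1 - Real.exp (-(e / T)))) := by
    rw [neg_div]
    field_simp
    ring
  rw [neg_div] at *
  constructor
  · nlinarith [mul_nonneg hT.le h1]
  · constructor
    · intro hEq
      apply h2.mp
      have : T * (e / T * g + g * Real.log g - (1 + g) * Real.log (1 + g)
          - Real.log (1 - Real.exp (-(e / T)))) = 0 := by linarith [hid]
      have := mul_eq_zero.mp this
      rcases this with hc | hc
      · exact absurd hc hT.ne'
      · exact hc
    · intro hgeq
      have := h2.mpr hgeq
      nlinarith [hid]

set_option maxHeartbeats 1000000 in
/-- (Quasi-free/bosonic free-energy minimization.) For `h` positive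
definite Hermitian and `T > 0`, every positive semidefinite Hermitian `γ` satisfies
`Tr(hγ) − T·S(γ) ≥ T·Tr log(1 − e^{−h/T})`, with equality iff
`γ = (e^{h/T} − 1)^{−1}` (the Bose–Einstein density matrix). -/
theorem bosonic_free_energy_minimization
    (n : ℕ) (hn : 1 ≤ n) (T : ℝ) (hT : 0 < T)
    (h γ : Matrix (Fin n) (Fin n) ℂ)
    (hh : h.PosDef) (hγ : γ.PosSemidef) :
    (T * ∑ i, Real.log (1 - Real.exp (-(hh.1.eigenvalues i) / T))
        ≤ (h * γ).trace.re - T * bosonicEntropy n γ) ∧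
    ((h * γ).trace.re - T * bosonicEntropy n γ
        = T * ∑ i, Real.log (1 - Real.exp (-(hh.1.eigenvalues i) / T))
      ↔ γ = (NormedSpace.exp (((T⁻¹ : ℝ) : ℂ) • h) - 1)⁻¹) := by
  classical
  set e : Fin n → ℝ := hh.1.eigenvalues with he
  set g : Fin n → ℝ := hγ.1.eigenvalues with hg
  have hepos : ∀ i, 0 < e i := hh.eigenvalues_pos
  have hgnn : ∀ j, 0 ≤ g j := hγ.eigenvalues_nonneg
  set U : Matrix (Fin n) (Fin n) ℂ := (hh.1.eigenvectorUnitary : Matrix (Fin n) (Fin n) ℂ) with hU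
  set V : Matrix (Fin n) (Fin n) ℂ := (hγ.1.eigenvectorUnitary : Matrix (Fin n) (Fin n) ℂ) with hV
  have hUU : star U * U = 1 := Unitary.star_mul_self_of_mem (hh.1.eigenvectorUnitary).2
  have hUU' : U * star U = 1 := Unitary.mul_star_self_of_mem (hh.1.eigenvectorUnitary).2
  have hVV : star V * V = 1 := Unitary.star_mul_self_of_mem (hγ.1.eigenvectorUnitary).2
  have hVV' : V * star V = 1 := Unitary.mul_star_self_of_mem (hγ.1.eigenvectorUnitary).2
  set W : Matrix (Fin n) (Fin n) ℂ := star U * V with hW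
  have hWW : W * star W = 1 := by
    rw [hW, star_mul, star_star, mul_assoc, ← mul_assoc V, hVV', one_mul, hUU]
  have hWW' : star W * W = 1 := by
    rw [hW, star_mul, star_star, mul_assoc, ← mul_assoc U, hUU', one_mul, hVV]
  set De : Matrix (Fin n) (Fin n) ℂ := Matrix.diagonal (fun i => ((e i : ℝ) : ℂ)) with hDe
  set Dg : Matrix (Fin n) (Fin n) ℂ := Matrix.diagonal (fun j => ((g j : ℝ) : ℂ)) with hDg
  have hspec : h = U * De * star U := hh.1.spectral_theorem
  have hspecγ : γ = V * Dg * star V := hγ.1.spectral_theorem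
  set p : Fin n → Fin n → ℝ := fun i j => Complex.normSq (W i j) with hp
  have hpnn : ∀ i j, 0 ≤ p i j := fun i j => Complex.normSq_nonneg _
  -- trace formula
  have htrace : (h * γ).trace = ((∑ i, ∑ j, e i * g j * p i j : ℝ) : ℂ) := by
    have : h * γ = U * (De * W * Dg * star W) * star U := by
      rw [hspec, hspecγ, hW]
      simp only [Matrix.mul_assoc, star_mul, star_star, hUU', Matrix.mul_one]
    rw [this, Matrix.trace_mul_cycle, ← Matrix.mul_assoc, hUU, Matrix.one_mul]
    have hM : De * W * Dg * star W = De * (W * Dg * star W) := by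
      simp only [Matrix.mul_assoc]
    rw [hM, Matrix.trace]
    push_cast
    apply Finset.sum_congr rfl
    intro i _
    rw [Matrix.diag_apply, Matrix.diagonal_mul, Matrix.mul_apply, Finset.mul_sum]
    apply Finset.sum_congr rfl
    intro j _
    rw [Matrix.mul_diagonal, Matrix.star_apply]
    rw [show (star (W i j) : ℂ) = (starRingEnd ℂ) (W i j) from rfl]
    rw [mul_comm (W i j) _, mul_assoc, Complex.mul_conj]
    push_cast
    ring
  have htrre : (h * γ).trace.re = ∑ i, ∑ j, e i * g j * p i j := by
    rw [htrace, Complex.ofReal_re]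
  -- row and column sums of p are 1
  have hrow : ∀ i, ∑ j, p i j = 1 := by
    intro i
    have h1 : (W * star W) i i = 1 := by rw [hWW, Matrix.one_apply_eq]
    rw [Matrix.mul_apply] at h1
    have h2 : ∀ j ∈ Finset.univ, W i j * star W j i = ((p i j : ℝ) : ℂ) := by
      intro j _
      rw [Matrix.star_apply,
        show (star (W i j) : ℂ) = (starRingEnd ℂ) (W i j) from rfl, Complex.mul_conj]
    rw [Finset.sum_congr rfl h2] at h1
    exact_mod_cast h1
  have hcol : ∀ j, ∑ i, p i j = 1 := by
    intro j
    have h1 : (star W * W) j j = 1 := by rw [hWW', Matrix.one_apply_eq]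
    rw [Matrix.mul_apply] at h1
    have h2 : ∀ i ∈ Finset.univ, star W j i * W i j = ((p i j : ℝ) : ℂ) := by
      intro i _
      rw [Matrix.star_apply,
        show (star (W i j) : ℂ) = (starRingEnd ℂ) (W i j) from rfl, mul_comm,
        Complex.mul_conj]
    rw [Finset.sum_congr rfl h2] at h1
    exact_mod_cast h1
  -- entropy as a sum over eigenvalues
  have hent : bosonicEntropy n γ
      = ∑ j, ((1 + g j) * Real.log (1 + g j) - g j * Real.log (g j)) := by
    rw [bosonicEntropy, specSum, dif_pos hγ.1]
  -- the Bose-Einstein occupation numbers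
  set r : Fin n → ℝ := fun i => (Real.exp (e i / T) - 1)⁻¹ with hr
  -- the two double-sum decompositions
  set Lf : Fin n × Fin n → ℝ :=
    fun x => p x.1 x.2 * (T * Real.log (1 - Real.exp (-e x.1 / T))) with hLf
  set Rf : Fin n × Fin n → ℝ :=
    fun x => p x.1 x.2 * (e x.1 * g x.2
      - T * ((1 + g x.2) * Real.log (1 + g x.2) - g x.2 * Real.log (g x.2))) with hRf
  have hLsum : T * ∑ i, Real.log (1 - Real.exp (-e i / T))
      = ∑ x ∈ Finset.univ ×ˢ Finset.univ, Lf x := by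
    rw [Finset.sum_product, Finset.mul_sum]
    apply Finset.sum_congr rfl
    intro i _
    rw [hLf]
    simp only []
    rw [← Finset.sum_mul, hrow i, one_mul]
  have hRsum : (h * γ).trace.re - T * bosonicEntropy n γ
      = ∑ x ∈ Finset.univ ×ˢ Finset.univ, Rf x := by
    rw [Finset.sum_product, htrre, hent]
    have hsplit : ∀ i j, Rf (i, j) = e i * g j * p i j
        - p i j * (T * ((1 + g j) * Real.log (1 + g j) - g j * Real.log (g j))) := by
      intro i j; rw [hRf]; ring
    calc (∑ i, ∑ j, e i * g j * p i j)
        - T * ∑ j, ((1 + g j) * Real.log (1 + g j) - g j * Real.log (g j))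
        = (∑ i, ∑ j, e i * g j * p i j)
          - ∑ j, (∑ i, p i j) * (T * ((1 + g j) * Real.log (1 + g j)
              - g j * Real.log (g j))) := by
          rw [Finset.mul_sum]
          congr 1
          apply Finset.sum_congr rfl
          intro j _
          rw [hcol j, one_mul]
      _ = ∑ i, ∑ j, Rf (i, j) := by
          simp_rw [hsplit, Finset.sum_mul, Finset.sum_sub_distrib]
          congr 1
          exact Finset.sum_comm
  -- termwise comparison
  have hterm : ∀ x : Fin n × Fin n, Lf x ≤ Rf x := fun x =>
    mul_le_mul_of_nonneg_left (scalar_bridge hT (hepos x.1) (hgnn x.2)).1 (hpnn x.1 x.2)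
  -- equality is equivalent to condition C
  have heqiff : ((h * γ).trace.re - T * bosonicEntropy n γ
        = T * ∑ i, Real.log (1 - Real.exp (-e i / T)))
      ↔ ∀ i j, W i j ≠ 0 → g j = r i := by
    rw [hRsum, hLsum, eq_comm, Finset.sum_eq_sum_iff_of_le (fun x _ => hterm x)]
    constructor
    · intro hall i j hWij
      have hx := hall (i, j) (Finset.mem_product.mpr ⟨Finset.mem_univ _, Finset.mem_univ _⟩)
      have hp0 : p i j ≠ 0 := fun hc => hWij (Complex.normSq_eq_zero.mp hc)
      rw [hLf, hRf] at hx
      simp only [] at hx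
      have hcancel := mul_left_cancel₀ hp0 hx
      exact (scalar_bridge hT (hepos i) (hgnn j)).2.mp hcancel.symm
    · intro hC x _
      rcases eq_or_ne (W x.1 x.2) 0 with hw | hw
      · have hp0 : p x.1 x.2 = 0 := by rw [hp]; simp [hw]
        rw [hLf, hRf]; simp only [hp0, zero_mul]
      · have := (scalar_bridge hT (hepos x.1) (hgnn x.2)).2.mpr (hC _ _ hw)
        rw [hLf, hRf]; simp only []
        rw [this]
  -- Bose-Einstein matrix
  set Dr : Matrix (Fin n) (Fin n) ℂ := Matrix.diagonal (fun i => ((r i : ℝ) : ℂ)) with hDr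
  have hEgt : ∀ i, 1 < Real.exp (e i / T) := by
    intro i
    rw [← Real.exp_zero]
    exact Real.exp_lt_exp.mpr (div_pos (hepos i) hT)
  have hE1 : ∀ i, Real.exp (e i / T) - 1 ≠ 0 := fun i => sub_ne_zero.mpr (hEgt i).ne'
  have hUisUnit : IsUnit U := ⟨⟨U, star U, hUU', hUU⟩, rfl⟩
  have hUinv : U⁻¹ = star U := Matrix.inv_eq_left_inv hUU
  have hBE : (NormedSpace.exp (((T⁻¹ : ℝ) : ℂ) • h) - 1)⁻¹ = U * Dr * star U := by
    have hsm : ((T⁻¹ : ℝ) : ℂ) • h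
        = U * Matrix.diagonal (fun i => ((e i / T : ℝ) : ℂ)) * star U := by
      rw [hspec, hDe]
      rw [show (Matrix.diagonal fun i => ((e i / T : ℝ) : ℂ))
          = ((T⁻¹ : ℝ) : ℂ) • Matrix.diagonal (fun i => ((e i : ℝ) : ℂ)) from by
        ext i j
        rw [Matrix.smul_apply]
        rcases eq_or_ne i j with rfl | hij
        · rw [Matrix.diagonal_apply_eq, Matrix.diagonal_apply_eq, smul_eq_mul]
          push_cast
          rw [div_eq_inv_mul]
        · rw [Matrix.diagonal_apply_ne _ hij, Matrix.diagonal_apply_ne _ hij, smul_zero]]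
      rw [Matrix.mul_smul, Matrix.smul_mul]
    have hexp : NormedSpace.exp (((T⁻¹ : ℝ) : ℂ) • h)
        = U * Matrix.diagonal (fun i => ((Real.exp (e i / T) : ℝ) : ℂ)) * star U := by
      have hfun : (NormedSpace.exp fun i => ((e i / T : ℝ) : ℂ))
          = fun i => ((Real.exp (e i / T) : ℝ) : ℂ) := by
        funext i
        rw [Pi.coe_exp, ← Complex.exp_eq_exp_ℂ, Complex.ofReal_exp]
      rw [hsm, ← hUinv, Matrix.exp_conj U _ hUisUnit, Matrix.exp_diagonal, hfun, hUinv]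
    have hsub : NormedSpace.exp (((T⁻¹ : ℝ) : ℂ) • h) - 1
        = U * Matrix.diagonal (fun i => ((Real.exp (e i / T) : ℝ) : ℂ) - 1) * star U := by
      rw [hexp]
      have h1 : (1 : Matrix (Fin n) (Fin n) ℂ) = U * 1 * star U := by
        rw [Matrix.mul_one, hUU']
      rw [show Matrix.diagonal (fun i => ((Real.exp (e i / T) : ℝ) : ℂ) - 1)
          = Matrix.diagonal (fun i => ((Real.exp (e i / T) : ℝ) : ℂ)) - 1 from by
        rw [← Matrix.diagonal_one, Matrix.diagonal_sub]]
      rw [mul_sub, sub_mul, mul_one, hUU']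
    rw [hsub]
    apply Matrix.inv_eq_right_inv
    calc U * Matrix.diagonal (fun i => ((Real.exp (e i / T) : ℝ) : ℂ) - 1) * star U
          * (U * Dr * star U)
        = U * (Matrix.diagonal (fun i => ((Real.exp (e i / T) : ℝ) : ℂ) - 1)
          * ((star U * U) * (Dr * star U))) := by simp only [Matrix.mul_assoc]
      _ = U * ((Matrix.diagonal (fun i => ((Real.exp (e i / T) : ℝ) : ℂ) - 1)
          * Dr) * star U) := by rw [hUU, Matrix.one_mul, Matrix.mul_assoc]
      _ = 1 := by
          rw [hDr, Matrix.diagonal_mul_diagonal]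
          rw [show (fun i => ((((Real.exp (e i / T) : ℝ) : ℂ) - 1) * ((r i : ℝ) : ℂ)))
              = fun _ => (1 : ℂ) from by
            funext i
            rw [hr]
            push_cast
            rw [mul_inv_cancel₀]
            exact_mod_cast fun hc => hE1 i (by exact_mod_cast hc)]
          rw [Matrix.diagonal_one, Matrix.one_mul, hUU']
  have hUW : U * W = V := by rw [hW, ← Matrix.mul_assoc, hUU', Matrix.one_mul]
  -- condition C implies γ is the BE matrix
  have hCtoBE : (∀ i j, W i j ≠ 0 → g j = r i) → γ = U * Dr * star U := by
    intro hC
    have hkey : ∀ i j, ((g j : ℝ) : ℂ) * W i j = ((r i : ℝ) : ℂ) * W i j := by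
      intro i j
      rcases eq_or_ne (W i j) 0 with hw | hw
      · rw [hw, mul_zero, mul_zero]
      · rw [hC i j hw]
    have hWDW : W * Dg * star W = Dr := by
      ext i k
      rw [Matrix.mul_apply]
      have hterm2 : ∀ j ∈ Finset.univ, (W * Dg) i j * star W j k
          = ((r i : ℝ) : ℂ) * (W i j * star W j k) := by
        intro j _
        rw [Matrix.mul_diagonal, mul_comm (W i j) (((g j : ℝ) : ℂ)), hkey i j]
        ring
      rw [Finset.sum_congr rfl hterm2, ← Finset.mul_sum, ← Matrix.mul_apply, hWW, hDr]
      rw [Matrix.one_apply, Matrix.diagonal_apply]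
      split
      · rw [mul_one]
      · rw [mul_zero]
    rw [hspecγ, ← hUW, star_mul]
    rw [show U * W * Dg * (star W * star U) = U * (W * Dg * star W) * star U from by
      simp only [Matrix.mul_assoc]]
    rw [hWDW]
  -- γ being the BE matrix implies condition C
  have hBEtoC : γ = U * Dr * star U → (∀ i j, W i j ≠ 0 → g j = r i) := by
    intro hBEeq i j hw
    have hD : W * Dg * star W = Dr := by
      have h1 : U * (W * Dg * star W) * star U = U * Dr * star U := by
        rw [show U * (W * Dg * star W) * star U = U * W * Dg * (star W * star U) from by
          simp only [Matrix.mul_assoc], ← star_mul, hUW, ← hspecγ, hBEeq]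
      calc W * Dg * star W
          = (star U * U) * (W * Dg * star W) * (star U * U) := by
            rw [hUU, Matrix.one_mul, Matrix.mul_one]
        _ = star U * (U * (W * Dg * star W) * star U) * U := by
            simp only [Matrix.mul_assoc]
        _ = star U * (U * Dr * star U) * U := by rw [h1]
        _ = (star U * U) * Dr * (star U * U) := by simp only [Matrix.mul_assoc]
        _ = Dr := by rw [hUU, Matrix.one_mul, Matrix.mul_one]
    have hD2 : W * (Dg * Dg) * star W = Dr * Dr := by
      calc W * (Dg * Dg) * star W
          = W * Dg * ((star W * W) * (Dg * star W)) := by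
            rw [hWW', Matrix.one_mul]; simp only [Matrix.mul_assoc]
        _ = (W * Dg * star W) * (W * Dg * star W) := by simp only [Matrix.mul_assoc]
        _ = Dr * Dr := by rw [hD]
    -- diagonal entries
    have hdiag : ∀ q : Fin n → ℝ,
        (W * Matrix.diagonal (fun k => ((q k : ℝ) : ℂ)) * star W) i i
          = ((∑ k, q k * p i k : ℝ) : ℂ) := by
      intro q
      rw [Matrix.mul_apply]
      push_cast
      apply Finset.sum_congr rfl
      intro k _
      rw [Matrix.mul_diagonal, Matrix.star_apply,
        show (star (W i k) : ℂ) = (starRingEnd ℂ) (W i k) from rfl,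
        mul_comm (W i k) (((q k : ℝ) : ℂ)), mul_assoc, Complex.mul_conj]
    have m1 : ∑ k, g k * p i k = r i := by
      have := congrArg (fun M => M i i) hD
      rw [hDg, hdiag g, hDr, Matrix.diagonal_apply_eq] at this
      exact_mod_cast this
    have m2 : ∑ k, (g k * g k) * p i k = r i * r i := by
      have := congrArg (fun M => M i i) hD2
      rw [hDg, Matrix.diagonal_mul_diagonal] at this
      rw [show (fun k => ((g k : ℝ) : ℂ) * ((g k : ℝ) : ℂ)) = fun k => (((g k * g k : ℝ)) : ℂ) from by
        funext k; push_cast; ring] at this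
      rw [hdiag (fun k => g k * g k), hDr, Matrix.mul_apply] at this
      have hrr : ∑ x, Matrix.diagonal (fun i => ((r i : ℝ) : ℂ)) i x
          * Matrix.diagonal (fun i => ((r i : ℝ) : ℂ)) x i = ((r i * r i : ℝ) : ℂ) := by
        rw [Finset.sum_eq_single i]
        · rw [Matrix.diagonal_apply_eq]; push_cast; ring
        · intro b _ hb
          rw [Matrix.diagonal_apply_ne _ (Ne.symm hb), zero_mul]
        · intro hb; exact absurd (Finset.mem_univ i) hb
      rw [hrr] at this
      exact_mod_cast this
    have hvar : ∑ k, p i k * (g k - r i) ^ 2 = 0 := by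
      have expand : ∀ k ∈ Finset.univ, p i k * (g k - r i) ^ 2
          = (g k * g k) * p i k - 2 * r i * (g k * p i k) + r i * r i * p i k := by
        intro k _; ring
      rw [Finset.sum_congr rfl expand, Finset.sum_add_distrib, Finset.sum_sub_distrib,
        ← Finset.mul_sum, ← Finset.mul_sum, m1, m2]
      rw [hrow i]
      ring
    have hzero := (Finset.sum_eq_zero_iff_of_nonneg
      (fun k _ => mul_nonneg (hpnn i k) (sq_nonneg _))).mp hvar j (Finset.mem_univ j)
    have hp0 : p i j ≠ 0 := fun hc => hw (Complex.normSq_eq_zero.mp hc)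
    have := (mul_eq_zero.mp hzero).resolve_left hp0
    have := pow_eq_zero_iff (n := 2) (by norm_num) |>.mp this
    linarith [sub_eq_zero.mp this]
  -- assemble
  constructor
  · rw [hLsum, hRsum]
    exact Finset.sum_le_sum (fun x _ => hterm x)
  · rw [heqiff]
    constructor
    · intro hC
      rw [hBE]
      exact hCtoBE hC
    · intro hγeq
      apply hBEtoC
      rw [← hBE]
      exact hγeq
end
end
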